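/- Let b(n) denote the number of permutations π of {1,...,n} such that there are no indices a < b < c < d with max{π(a), π(c)} < min{π(b), π(d)}. Then b(1) = 1, b(2) = 2, and for all n ≥ 3, b(n) = 4·b(n-1) − 2·b(n-2). -/

import Mathlib

/-!
Sort the B-avoiding permutations of `{1, …, n + 1}` by their last entry `z`. For `z = 1` or
`z = 2`, deleting `z` and standardizing is a bijection onto the B-avoiders of size `n`, because a
pattern ending at `z` would need two entries smaller than `z`. For `z ≥ 3` the entries `1` and `2`
are adjacent (otherwise `1 a 2 z` or `2 a 1 z` is a pattern), and merging them into a single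
entry is two-to-one onto the B-avoiders of size `n` whose last entry is at least `2`; a pattern
never uses both entries of the merged pair. If `T n` counts the B-avoiders of size `n` with last
entry at least `2`, then `b (n + 1) = b n + T (n + 1)` and `T (n + 2) = b (n + 1) + 2 T (n + 1)`,
which eliminate to `b (n + 2) = 4 b (n + 1) - 2 b n`. For `n ≤ 3` every permutation avoids the
pattern, so `b n = n!`.
-/

/-- `l` is a permutation of `{1, ..., n}`, viewed as the sequence of its values. -/
def IsPermOf (l : List ℕ) (n : ℕ) : Prop := l.Perm (List.range' 1 n)

/-- `l` is B-avoiding: there are no indices `a < b < c < d` with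
`max {l a, l c} < min {l b, l d}`. -/
def BAvoid (l : List ℕ) : Prop :=
  ∀ a b c d : Fin l.length, a < b → b < c → c < d →
    ¬ (max (l.get a) (l.get c) < min (l.get b) (l.get d))

/-- the number of B-avoiding permutations of `{1, ..., n}`. -/
noncomputable def bcount (n : ℕ) : ℕ :=
  Nat.card {l : List ℕ // IsPermOf l n ∧ BAvoid l}

open List

theorem List.map_eq_self {α : Type*} {f : α → α} {l : List α} (h : ∀ a ∈ l, f a = a) :
    l.map f = l :=
  (map_congr_left h).trans (map_id l)

theorem List.exists_append_cons_append_cons {α : Type*} {l : List α} {a b : α} (ha : a ∈ l)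
    (hb : b ∈ l) (hab : a ≠ b) :
    ∃ u s t, l = u ++ a :: (s ++ b :: t) ∨ l = u ++ b :: (s ++ a :: t) := by
  obtain ⟨u, v, rfl⟩ := append_of_mem ha
  rcases mem_append.1 hb with hb | hb
  · obtain ⟨u₁, u₂, rfl⟩ := append_of_mem hb
    exact ⟨u₁, u₂, v, Or.inr (by simp)⟩
  · obtain ⟨v₁, v₂, rfl⟩ := append_of_mem ((mem_cons.1 hb).resolve_left hab.symm)
    exact ⟨u, v₁, v₂, Or.inl rfl⟩

theorem List.of_sublist_append_cons_cons {α : Type*} {s u w : List α} {c c' : α}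
    (h : s <+ u ++ c :: c' :: w) :
    s <+ u ++ c :: w ∨ s <+ u ++ c' :: w ∨
      ∃ s₁ s₂, s = s₁ ++ c :: c' :: s₂ ∧ s₁ <+ u ∧ s₂ <+ w := by
  obtain ⟨s₁, t, rfl, h₁, ht⟩ := sublist_append_iff.1 h
  rcases sublist_cons_iff.1 ht with ht | ⟨r, rfl, hr⟩
  · exact Or.inr (Or.inl (h₁.append ht))
  rcases sublist_cons_iff.1 hr with hr | ⟨r', rfl, hr'⟩
  · exact Or.inl (h₁.append (hr.cons_cons c))
  · exact Or.inr (Or.inr ⟨s₁, r', rfl, h₁, hr'⟩)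

def ContainsB (l : List ℕ) : Prop :=
  ∃ w x y z, [w, x, y, z] <+ l ∧ max w y < min x z

theorem bAvoid_iff_not_containsB {l : List ℕ} : BAvoid l ↔ ¬ ContainsB l := by
  simp only [BAvoid, ContainsB, not_exists, not_and]
  constructor
  · intro h w x y z hs hlt
    obtain ⟨f, hf⟩ := sublist_iff_exists_fin_orderEmbedding_get_eq.1 hs
    refine h (f ⟨0, by simp⟩) (f ⟨1, by simp⟩) (f ⟨2, by simp⟩) (f ⟨3, by simp⟩)
      (f.lt_iff_lt.2 (by simp)) (f.lt_iff_lt.2 (by simp)) (f.lt_iff_lt.2 (by simp)) ?_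
    rwa [← hf, ← hf, ← hf, ← hf]
  · intro h a b c d hab hbc hcd hlt
    refine h _ _ _ _ ?_ hlt
    simpa using map_getElem_sublist (l := l) (is := [a, b, c, d]) (by simp; omega)

theorem ContainsB.mono {l₁ l₂ : List ℕ} (h : l₁ <+ l₂) : ContainsB l₁ → ContainsB l₂ :=
  fun ⟨w, x, y, z, hs, hlt⟩ => ⟨w, x, y, z, hs.trans h, hlt⟩

theorem containsB_map_iff {f : ℕ → ℕ} {l : List ℕ} (hf : StrictMonoOn f {v | v ∈ l}) :
    ContainsB (l.map f) ↔ ContainsB l := by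
  have key {w x y z : ℕ} (hs : [w, x, y, z] <+ l) :
      max (f w) (f y) < min (f x) (f z) ↔ max w y < min x z := by
    have hm : ∀ v ∈ [w, x, y, z], v ∈ l := fun v hv => hs.subset hv
    simp only [max_lt_iff, lt_min_iff, hf.lt_iff_lt (hm w (by simp)) (hm x (by simp)),
      hf.lt_iff_lt (hm w (by simp)) (hm z (by simp)),
      hf.lt_iff_lt (hm y (by simp)) (hm x (by simp)),
      hf.lt_iff_lt (hm y (by simp)) (hm z (by simp))]
  constructor
  · rintro ⟨_, _, _, _, hs, hlt⟩
    obtain ⟨s, hsl, hs'⟩ := sublist_map_iff.1 hs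
    obtain ⟨w, x, y, z, rfl⟩ := length_eq_four.1 (by simpa using congrArg length hs'.symm)
    obtain ⟨rfl, rfl, rfl, rfl⟩ : _ ∧ _ ∧ _ ∧ _ := by simpa using hs'
    exact ⟨w, x, y, z, hsl, (key hsl).1 hlt⟩
  · rintro ⟨w, x, y, z, hs, hlt⟩
    exact ⟨f w, f x, f y, f z, hs.map f, (key hs).2 hlt⟩

-- A pattern ending at the new entry `k` would need two distinct entries below `k`.
theorem containsB_append_singleton_iff {l : List ℕ} {k : ℕ} (hl : l.Nodup)
    (hk : ∀ v ∈ l, ∀ w ∈ l, v < k → w < k → v = w) :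
    ContainsB (l ++ [k]) ↔ ContainsB l := by
  refine ⟨?_, ContainsB.mono (sublist_append_left l [k])⟩
  rintro ⟨w, x, y, z, hs, hlt⟩
  obtain ⟨s, t, hst, hsl, ht⟩ := sublist_append_iff.1 hs
  rcases sublist_singleton.1 ht with rfl | rfl
  · rw [append_nil] at hst
    exact ⟨w, x, y, z, hst ▸ hsl, hlt⟩
  · obtain ⟨rfl, hz⟩ := append_inj' (s₁ := [w, x, y]) (t₁ := [z]) hst rfl
    obtain rfl : z = k := by simpa using hz
    obtain rfl : w = y :=
      hk w (hsl.subset (by simp)) y (hsl.subset (by simp)) (by omega) (by omega)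
    simpa using hsl.nodup hl

theorem containsB_replace_iff {u w : List ℕ} {c c' : ℕ} (hc : ∀ v ∈ u ++ w, c < v)
    (hc' : ∀ v ∈ u ++ w, c' < v) : ContainsB (u ++ c :: w) ↔ ContainsB (u ++ c' :: w) := by
  have hmem {v} : v ∈ u ++ c :: w ↔ v = c ∨ v ∈ u ++ w := by simp [or_left_comm]
  have hf : StrictMonoOn (fun v => if v = c then c' else v) {v | v ∈ u ++ c :: w} := by
    intro a ha b hb hab
    simp only [Set.mem_ofPred_eq, hmem] at ha hb
    rcases ha with rfl | ha <;> rcases hb with rfl | hb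
    · omega
    · simpa [hab.ne'] using hc' b hb
    · exact absurd hab (hc a ha).asymm
    · have := hc a ha
      have := hc b hb
      dsimp only
      split_ifs <;> omega
  have hfix : ∀ v ∈ u ++ w, (if v = c then c' else v) = v := fun v hv => if_neg (hc v hv).ne'
  rw [← containsB_map_iff hf, map_append, map_cons, if_pos rfl,
    map_eq_self fun v hv => hfix v (mem_append_left w hv),
    map_eq_self fun v hv => hfix v (mem_append_right u hv)]

-- A pattern cannot use both entries of the adjacent pair `c, c'`: the one of them playing a
-- peak would have to exceed an entry outside the pair.
theorem containsB_append_cons_cons_iff {u w : List ℕ} {c c' : ℕ} (hc : ∀ v ∈ u ++ w, c < v)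
    (hc' : ∀ v ∈ u ++ w, c' < v) :
    ContainsB (u ++ c :: c' :: w) ↔ ContainsB (u ++ c :: w) := by
  refine ⟨?_, ContainsB.mono ((sublist_cons_self c' w).cons_cons c |>.append_left u)⟩
  rintro ⟨a, x, y, z, hs, hlt⟩
  rcases of_sublist_append_cons_cons hs with h | h | ⟨s₁, s₂, hs, h₁, h₂⟩
  · exact ⟨a, x, y, z, h, hlt⟩
  · exact (containsB_replace_iff hc hc').2 ⟨a, x, y, z, h, hlt⟩
  exfalso
  have hb (v) (hv : v ∈ s₁ ++ s₂) : c < v ∧ c' < v := by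
    have : v ∈ u ++ w := by
      rcases mem_append.1 hv with hv | hv
      exacts [mem_append_left w (h₁.subset hv), mem_append_right u (h₂.subset hv)]
    exact ⟨hc v this, hc' v this⟩
  simp only [max_lt_iff, lt_min_iff] at hlt
  rcases s₁ with _ | ⟨p, _ | ⟨q, _ | ⟨r, t⟩⟩⟩ <;>
    simp only [nil_append, cons_append, cons.injEq] at hs
  · have := hb y (by simp [← hs.2.2]); omega
  · have := hb a (by simp [hs.1]); omega
  · have := hb a (by simp [hs.1]); omega
  · have := congrArg length hs.2.2.2; simp at this; omega

theorem eq_nil_of_not_containsB {u s t : List ℕ} {x y : ℕ}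
    (h : ¬ ContainsB (u ++ x :: (s ++ y :: t)))
    (hlast : max x y < (u ++ x :: (s ++ y :: t)).getLastD 0) (hs : ∀ a ∈ s, max x y < a) :
    s = [] := by
  rcases s with _ | ⟨a, s⟩
  · rfl
  rcases eq_nil_or_concat t with rfl | ⟨t, z, rfl⟩
  · rw [show u ++ x :: (a :: s ++ [y]) = (u ++ x :: a :: s) ++ [y] by simp,
      getLastD_concat] at hlast
    omega
  simp only [concat_eq_append] at hlast h
  rw [show u ++ x :: (a :: s ++ y :: (t ++ [z])) = (u ++ x :: (a :: s ++ y :: t)) ++ [z] by simp,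
    getLastD_concat] at hlast
  refine absurd ⟨x, a, y, z, ?_, lt_min (hs a mem_cons_self) hlast⟩ h
  have : [x, a, y, z] <+ x :: a :: (s ++ y :: (t ++ [z])) :=
    ((((singleton_sublist.2 (by simp)).cons_cons y).trans (sublist_append_right s _)).cons_cons
      a).cons_cons x
  exact this.trans (sublist_append_right u _)

theorem IsPermOf.nodup {l : List ℕ} {n : ℕ} (h : IsPermOf l n) : l.Nodup :=
  h.nodup_iff.2 nodup_range'

theorem IsPermOf.mem_iff {l : List ℕ} {n : ℕ} (h : IsPermOf l n) {v : ℕ} :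
    v ∈ l ↔ 1 ≤ v ∧ v ≤ n := by
  rw [List.Perm.mem_iff h, mem_range'_1]
  omega

theorem IsPermOf.exists_eq_append_cons_one {q : List ℕ} {n : ℕ} (hq : IsPermOf q (n + 1)) :
    ∃ u w, q = u ++ 1 :: w ∧ (∀ v ∈ u, 2 ≤ v) ∧ ∀ v ∈ w, 2 ≤ v := by
  obtain ⟨u, w, rfl⟩ := append_of_mem (hq.mem_iff.2 ⟨le_rfl, by omega⟩)
  have h1 : 1 ∉ u ++ w := (nodup_cons.1 (nodup_middle.1 hq.nodup)).1
  have h2 (v) (hv : v ∈ u ++ w) : 2 ≤ v := by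
    have := (hq.mem_iff.1 (perm_middle.mem_iff.2 (mem_cons_of_mem 1 hv))).1
    have := ne_of_mem_of_not_mem hv h1
    omega
  exact ⟨u, w, rfl, fun v hv => h2 v (mem_append_left w hv),
    fun v hv => h2 v (mem_append_right u hv)⟩

theorem one_notMem_of_two_le {l : List ℕ} (h : ∀ v ∈ l, 2 ≤ v) : 1 ∉ l :=
  fun h1 => by simpa using h 1 h1

def shiftFrom (k v : ℕ) : ℕ := if v < k then v else v + 1

def unshiftFrom (k v : ℕ) : ℕ := if v < k then v else v - 1

theorem shiftFrom_strictMono (k : ℕ) : StrictMono (shiftFrom k) := by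
  intro a b hab
  unfold shiftFrom
  split_ifs <;> omega

theorem shiftFrom_unshiftFrom {k v : ℕ} (h : v ≠ k) : shiftFrom k (unshiftFrom k v) = v := by
  unfold shiftFrom unshiftFrom
  split_ifs <;> omega

theorem notMem_map_shiftFrom (k : ℕ) (l : List ℕ) : k ∉ l.map (shiftFrom k) := by
  simp only [mem_map, not_exists, not_and]
  intro v _
  unfold shiftFrom
  split_ifs <;> omega

def snocShift (k : ℕ) (q : List ℕ) : List ℕ := q.map (shiftFrom k) ++ [k]

theorem snocShift_injective (k : ℕ) : Function.Injective (snocShift k) :=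
  (append_left_injective [k]).comp (map_injective_iff.2 (shiftFrom_strictMono k).injective)

theorem snocShift_range'_perm {k n : ℕ} (h1 : 1 ≤ k) (hk : k ≤ n + 1) :
    snocShift k (range' 1 n) ~ range' 1 (n + 1) := by
  have hnd : (snocShift k (range' 1 n)).Nodup :=
    nodup_append.2 ⟨(nodup_map_iff (shiftFrom_strictMono k).injective).2 nodup_range',
      nodup_singleton k, fun a ha b hb => by
        rw [mem_singleton.1 hb]; exact ne_of_mem_of_not_mem ha (notMem_map_shiftFrom k _)⟩
  refine (perm_ext_iff_of_nodup hnd nodup_range').2 fun v => ?_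
  simp only [snocShift, mem_append, mem_map, mem_range'_1, mem_singleton]
  constructor
  · rintro (⟨a, ha, rfl⟩ | rfl)
    · unfold shiftFrom; split_ifs <;> omega
    · omega
  · intro hv
    by_cases hvk : v = k
    · exact Or.inr hvk
    · refine Or.inl ⟨unshiftFrom k v, ?_, shiftFrom_unshiftFrom hvk⟩
      unfold unshiftFrom; split_ifs <;> omega

theorem isPermOf_snocShift_iff {k n : ℕ} {q : List ℕ} (h1 : 1 ≤ k) (hk : k ≤ n + 1) :
    IsPermOf (snocShift k q) (n + 1) ↔ IsPermOf q n := by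
  have e := snocShift_range'_perm h1 hk
  calc snocShift k q ~ range' 1 (n + 1) ↔ snocShift k q ~ snocShift k (range' 1 n) :=
        ⟨fun h => h.trans e.symm, fun h => h.trans e⟩
    _ ↔ q ~ range' 1 n := by
        rw [snocShift, snocShift, perm_append_right_iff,
          map_perm_map_iff (shiftFrom_strictMono k).injective]

theorem containsB_snocShift_iff {k : ℕ} {q : List ℕ} (h2 : k ≤ 2) (hq : q.Nodup)
    (hpos : ∀ v ∈ q, 1 ≤ v) : ContainsB (snocShift k q) ↔ ContainsB q := by
  rw [snocShift, containsB_append_singleton_iff,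
    containsB_map_iff ((shiftFrom_strictMono k).strictMonoOn _)]
  · exact (nodup_map_iff (shiftFrom_strictMono k).injective).2 hq
  · simp only [mem_map]
    rintro _ ⟨a, ha, rfl⟩ _ ⟨b, hb, rfl⟩ hak hbk
    have := hpos a ha
    have := hpos b hb
    unfold shiftFrom at *
    split_ifs at * <;> omega

def avoiders (n : ℕ) : Set (List ℕ) := {l | IsPermOf l n ∧ BAvoid l}

theorem bcount_eq_ncard (n : ℕ) : bcount n = (avoiders n).ncard := rfl

theorem mem_avoiders_iff {l : List ℕ} {n : ℕ} :
    l ∈ avoiders n ↔ IsPermOf l n ∧ ¬ ContainsB l :=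
  and_congr_right' bAvoid_iff_not_containsB

theorem avoiders_finite (n : ℕ) : (avoiders n).Finite :=
  (finite_toSet (range' 1 n).permutations).subset fun _ hl => mem_permutations.2 hl.1

theorem ne_nil_of_mem_avoiders {l : List ℕ} {n : ℕ} (hl : l ∈ avoiders (n + 1)) : l ≠ [] :=
  ne_nil_of_length_pos (by simp [hl.1.length_eq])

theorem bcount_eq_factorial {n : ℕ} (hn : n ≤ 3) : bcount n = n.factorial := by
  have : avoiders n = ((range' 1 n).permutations.toFinset : Set (List ℕ)) := by
    ext l
    simp only [avoiders, Set.mem_ofPred_eq, Finset.mem_coe, mem_toFinset, mem_permutations]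
    refine and_iff_left_of_imp fun hl a b c d hab hbc hcd => absurd d.isLt ?_
    have := hl.length_eq
    simp at this
    omega
  rw [bcount_eq_ncard, this, Set.ncard_coe_finset,
    toFinset_card_of_nodup (nodup_permutations _ nodup_range'), length_permutations,
    length_range']

theorem snocShift_mem_avoiders_iff {k n : ℕ} {q : List ℕ} (h1 : 1 ≤ k) (h2 : k ≤ 2)
    (hk : k ≤ n + 1) : snocShift k q ∈ avoiders (n + 1) ↔ q ∈ avoiders n := by
  rw [mem_avoiders_iff, mem_avoiders_iff, isPermOf_snocShift_iff h1 hk]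
  exact and_congr_right fun hq =>
    not_congr (containsB_snocShift_iff h2 hq.nodup fun v hv => (hq.mem_iff.1 hv).1)

def avoidersLastEq (n k : ℕ) : Set (List ℕ) := {p ∈ avoiders n | p.getLastD 0 = k}

def avoidersLastGe (n k : ℕ) : Set (List ℕ) := {p ∈ avoiders n | k ≤ p.getLastD 0}

theorem avoidersLastEq_eq_image {n k : ℕ} (h1 : 1 ≤ k) (h2 : k ≤ 2) (hk : k ≤ n + 1) :
    avoidersLastEq (n + 1) k = snocShift k '' avoiders n := by
  ext p
  constructor
  · rintro ⟨hp, rfl⟩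
    obtain ⟨t, z, rfl⟩ := (eq_nil_or_concat p).resolve_left (ne_nil_of_mem_avoiders hp)
    simp only [concat_eq_append, getLastD_concat] at hp h1 h2 hk ⊢
    have hzt : z ∉ t := fun hz => by simpa using (nodup_append.1 hp.1.nodup).2.2 z hz
    have hp' : snocShift z (t.map (unshiftFrom z)) = t ++ [z] := by
      rw [snocShift, map_map]
      exact congrArg (· ++ [z])
        (map_eq_self fun v hv => shiftFrom_unshiftFrom (ne_of_mem_of_not_mem hv hzt))
    exact ⟨_, (snocShift_mem_avoiders_iff h1 h2 hk).1 (hp' ▸ hp), hp'⟩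
  · rintro ⟨q, hq, rfl⟩
    exact ⟨(snocShift_mem_avoiders_iff h1 h2 hk).2 hq, getLastD_concat⟩

theorem ncard_avoidersLastEq {n k : ℕ} (h1 : 1 ≤ k) (h2 : k ≤ 2) (hk : k ≤ n + 1) :
    (avoidersLastEq (n + 1) k).ncard = bcount n := by
  rw [avoidersLastEq_eq_image h1 h2 hk, Set.ncard_image_of_injective _ (snocShift_injective k),
    bcount_eq_ncard]

theorem ncard_avoidersLastGe (n k : ℕ) :
    (avoidersLastGe n k).ncard = (avoidersLastEq n k).ncard + (avoidersLastGe n (k + 1)).ncard := by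
  have hunion : avoidersLastGe n k = avoidersLastEq n k ∪ avoidersLastGe n (k + 1) := by
    ext p
    simp only [avoidersLastGe, avoidersLastEq, Set.mem_union, Set.mem_sep_iff, ← and_or_left]
    exact and_congr_right fun _ => by omega
  have hdisj : Disjoint (avoidersLastEq n k) (avoidersLastGe n (k + 1)) :=
    Set.disjoint_left.2 fun p hp hp' => by
      simp only [avoidersLastGe, avoidersLastEq, Set.mem_sep_iff] at hp hp'
      omega
  rw [hunion, Set.ncard_union_eq hdisj ((avoiders_finite n).sep _) ((avoiders_finite n).sep _)]

theorem avoidersLastGe_one (n : ℕ) : avoidersLastGe (n + 1) 1 = avoiders (n + 1) := by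
  refine Set.sep_eq_self_iff_mem_true.2 fun p hp => ?_
  obtain ⟨t, z, rfl⟩ := (eq_nil_or_concat p).resolve_left (ne_nil_of_mem_avoiders hp)
  simpa using (hp.1.mem_iff (v := z)).1 (by simp) |>.1

def pairBlock (b : Bool) : List ℕ := if b then [1, 2] else [2, 1]

def inflateOne (b : Bool) (q : List ℕ) : List ℕ :=
  q.flatMap fun v => if v = 1 then pairBlock b else [shiftFrom 1 v]

theorem inflateOne_of_one_notMem {b : Bool} {l : List ℕ} (h : 1 ∉ l) :
    inflateOne b l = l.map (shiftFrom 1) := by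
  induction l with
  | nil => rfl
  | cons a l ih =>
    rw [mem_cons, not_or] at h
    simp [inflateOne, if_neg (Ne.symm h.1), ← ih h.2]

theorem inflateOne_append_cons_one {b : Bool} {u w : List ℕ} (hu : 1 ∉ u) (hw : 1 ∉ w) :
    inflateOne b (u ++ 1 :: w) = u.map (shiftFrom 1) ++ pairBlock b ++ w.map (shiftFrom 1) := by
  rw [← inflateOne_of_one_notMem (b := b) hu, ← inflateOne_of_one_notMem (b := b) hw]
  simp [inflateOne]

theorem inflateOne_perm_snocShift {b : Bool} {u w : List ℕ} (hu : 1 ∉ u) (hw : 1 ∉ w) :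
    inflateOne b (u ++ 1 :: w) ~ snocShift 1 (u ++ 1 :: w) := by
  rw [inflateOne_append_cons_one hu hw, snocShift, map_append, map_cons, append_assoc,
    append_assoc, perm_append_left_iff]
  cases b
  · exact (perm_append_singleton 1 _).symm.cons 2
  · exact (perm_append_singleton 1 (2 :: _)).symm

theorem containsB_inflateOne_iff {b : Bool} {u w : List ℕ} (hu : ∀ v ∈ u, 2 ≤ v)
    (hw : ∀ v ∈ w, 2 ≤ v) :
    ContainsB (inflateOne b (u ++ 1 :: w)) ↔ ContainsB (u ++ 1 :: w) := by
  have hbig : ∀ v ∈ u.map (shiftFrom 1) ++ w.map (shiftFrom 1), 2 < v := by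
    simp only [mem_append, mem_map]
    rintro _ (⟨a, ha, rfl⟩ | ⟨a, ha, rfl⟩) <;> [have := hu a ha; have := hw a ha] <;>
      unfold shiftFrom <;> split_ifs <;> omega
  have h1 := fun v hv => (hbig v hv).trans' one_lt_two
  rw [inflateOne_append_cons_one (one_notMem_of_two_le hu) (one_notMem_of_two_le hw),
    ← containsB_map_iff (l := u ++ 1 :: w) ((shiftFrom_strictMono 1).strictMonoOn _)]
  simp only [map_append, map_cons, show shiftFrom 1 1 = 2 from rfl]
  cases b
  · simpa [pairBlock] using containsB_append_cons_cons_iff hbig h1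
  · simpa [pairBlock] using
      (containsB_append_cons_cons_iff h1 hbig).trans (containsB_replace_iff h1 hbig)

theorem inflateOne_mem_avoiders_iff {b : Bool} {n : ℕ} {u w : List ℕ} (hu : ∀ v ∈ u, 2 ≤ v)
    (hw : ∀ v ∈ w, 2 ≤ v) :
    inflateOne b (u ++ 1 :: w) ∈ avoiders (n + 1) ↔ u ++ 1 :: w ∈ avoiders n := by
  have e := inflateOne_perm_snocShift (b := b) (one_notMem_of_two_le hu) (one_notMem_of_two_le hw)
  rw [mem_avoiders_iff, mem_avoiders_iff, containsB_inflateOne_iff hu hw,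
    ← isPermOf_snocShift_iff le_rfl (Nat.le_add_left 1 n)]
  exact and_congr_left' ⟨fun h => e.symm.trans h, fun h => e.trans h⟩

theorem three_le_getLastD_inflateOne_iff {b : Bool} {q : List ℕ} (hq : ∀ v ∈ q, 1 ≤ v) :
    3 ≤ (inflateOne b q).getLastD 0 ↔ 2 ≤ q.getLastD 0 := by
  rcases eq_nil_or_concat q with rfl | ⟨t, z, rfl⟩
  · simp [inflateOne]
  have hz : 1 ≤ z := hq z (by simp)
  simp only [concat_eq_append, inflateOne, flatMap_append, flatMap_cons, flatMap_nil, append_nil,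
    getLastD_concat]
  by_cases hz1 : z = 1
  · subst hz1; cases b <;> simp [pairBlock]
  · simp only [hz1, if_false, getLastD_concat, shiftFrom]
    split_ifs <;> omega

theorem inflateOne_erase_one {b : Bool} {u w : List ℕ} (hu : 1 ∉ u) (hw : 1 ∉ w) :
    (inflateOne b (u ++ 1 :: w)).erase 1 = (u ++ 1 :: w).map (shiftFrom 1) := by
  rw [inflateOne_append_cons_one hu hw, append_assoc,
    erase_append_right _ (notMem_map_shiftFrom 1 u)]
  cases b <;> simp [pairBlock, shiftFrom]

theorem inflateOne_inj {b b' : Bool} {u w u' w' : List ℕ} (hu : 1 ∉ u) (hw : 1 ∉ w)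
    (hu' : 1 ∉ u') (hw' : 1 ∉ w')
    (h : inflateOne b (u ++ 1 :: w) = inflateOne b' (u' ++ 1 :: w')) :
    b = b' ∧ u ++ 1 :: w = u' ++ 1 :: w' := by
  refine ⟨?_, map_injective_iff.2 (shiftFrom_strictMono 1).injective ?_⟩
  · have h2 {l : List ℕ} (hl : 1 ∉ l) : 2 ∉ l.map (shiftFrom 1) := by
      simp only [mem_map, not_exists, not_and]
      intro v hv
      have := ne_of_mem_of_not_mem hv hl
      unfold shiftFrom; split_ifs <;> omega
    have key {U W U' W' : List ℕ} (h1U : 1 ∉ U) (h2U : 2 ∉ U) (h1W : 1 ∉ W)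
        (h : U ++ [1, 2] ++ W = U' ++ [2, 1] ++ W') : False := by
      have := (append_cons_inj_of_notMem (z₁ := 2 :: W) (x₂ := U' ++ [2]) h1U
        (by simp [h1W])).1 (by simpa using h)
      exact h2U (this.1 ▸ by simp)
    rw [inflateOne_append_cons_one hu hw, inflateOne_append_cons_one hu' hw'] at h
    have h1 {l : List ℕ} := notMem_map_shiftFrom 1 l
    cases b <;> cases b'
    · rfl
    · exact (key h1 (h2 hu') h1 h.symm).elim
    · exact (key h1 (h2 hu) h1 h).elim
    · rfl
  · rw [← inflateOne_erase_one hu hw, ← inflateOne_erase_one hu' hw', h]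

theorem eq_inflateOne_of_eq_append_pairBlock {n : ℕ} {p u t : List ℕ} {b : Bool}
    (hp : IsPermOf p n) (h : p = u ++ pairBlock b ++ t) :
    ∃ u₀ w₀, (∀ v ∈ u₀, 2 ≤ v) ∧ (∀ v ∈ w₀, 2 ≤ v) ∧ p = inflateOne b (u₀ ++ 1 :: w₀) := by
  have e : p ~ pairBlock b ++ (u ++ t) :=
    h ▸ (append_assoc u _ t).symm ▸ perm_append_comm_assoc _ _ _
  have hd := (nodup_append.1 (e.nodup_iff.1 hp.nodup)).2.2
  have h3 (v) (hv : v ∈ u ++ t) : 3 ≤ v := by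
    have := (hp.mem_iff.1 (e.mem_iff.2 (mem_append_right _ hv))).1
    have := hd 1 (by cases b <;> simp [pairBlock]) v hv
    have := hd 2 (by cases b <;> simp [pairBlock]) v hv
    omega
  have hu (v) (hv : v ∈ u) := h3 v (mem_append_left t hv)
  have ht (v) (hv : v ∈ t) := h3 v (mem_append_right u hv)
  have h2 {l : List ℕ} (hl : ∀ v ∈ l, 3 ≤ v) : ∀ v ∈ l.map (unshiftFrom 1), 2 ≤ v := by
    simp only [mem_map, forall_exists_index, and_imp, forall_apply_eq_imp_iff₂]
    intro v hv
    have := hl v hv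
    unfold unshiftFrom; split_ifs <;> omega
  have hback {l : List ℕ} (hl : ∀ v ∈ l, 3 ≤ v) :
      (l.map (unshiftFrom 1)).map (shiftFrom 1) = l := by
    rw [map_map]
    exact map_eq_self fun v hv => shiftFrom_unshiftFrom (by have := hl v hv; omega)
  refine ⟨_, _, h2 hu, h2 ht, ?_⟩
  rw [inflateOne_append_cons_one (one_notMem_of_two_le (h2 hu)) (one_notMem_of_two_le (h2 ht)),
    hback hu, hback ht, h]

theorem exists_eq_inflateOne {m : ℕ} {p : List ℕ} (hp : p ∈ avoiders (m + 2))
    (hz : 3 ≤ p.getLastD 0) :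
    ∃ b u w, (∀ v ∈ u, 2 ≤ v) ∧ (∀ v ∈ w, 2 ≤ v) ∧ p = inflateOne b (u ++ 1 :: w) := by
  obtain ⟨hperm, hnc⟩ := mem_avoiders_iff.1 hp
  suffices ∃ b u t, p = u ++ pairBlock b ++ t by
    obtain ⟨b, u, t, h⟩ := this
    obtain ⟨u₀, w₀, hu, hw, e⟩ := eq_inflateOne_of_eq_append_pairBlock hperm h
    exact ⟨b, u₀, w₀, hu, hw, e⟩
  have hgap (x y : ℕ) (hxy : x = 1 ∧ y = 2 ∨ x = 2 ∧ y = 1) (u s t : List ℕ)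
      (h : p = u ++ x :: (s ++ y :: t)) : s = [] := by
    subst h
    have hnd := hperm.nodup
    refine eq_nil_of_not_containsB hnc (by omega) fun a ha => ?_
    have : a ≠ x ∧ a ≠ y := by simp [nodup_append] at hnd; grind
    have := (hperm.mem_iff (v := a)).1 (by simp [ha]) |>.1
    omega
  obtain ⟨u, s, t, h | h⟩ := exists_append_cons_append_cons
    (hperm.mem_iff.2 (by omega : 1 ≤ 1 ∧ 1 ≤ m + 2))
    (hperm.mem_iff.2 (by omega : 1 ≤ 2 ∧ 2 ≤ m + 2)) (by decide)
  · exact ⟨true, u, t, by simp [h, hgap 1 2 (by omega) u s t h, pairBlock]⟩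
  · exact ⟨false, u, t, by simp [h, hgap 2 1 (by omega) u s t h, pairBlock]⟩

theorem avoidersLastGe_three_eq_image (m : ℕ) :
    avoidersLastGe (m + 2) 3 =
      (fun x : Bool × List ℕ => inflateOne x.1 x.2) '' (Set.univ ×ˢ avoidersLastGe (m + 1) 2) := by
  ext p
  constructor
  · rintro ⟨hp, hz⟩
    obtain ⟨b, u, w, hu, hw, rfl⟩ := exists_eq_inflateOne hp hz
    have hq := (inflateOne_mem_avoiders_iff hu hw).1 hp
    exact ⟨(b, u ++ 1 :: w), ⟨trivial, hq,
      (three_le_getLastD_inflateOne_iff fun v hv => (hq.1.mem_iff.1 hv).1).1 hz⟩, rfl⟩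
  · rintro ⟨⟨b, q⟩, ⟨-, hq, hz⟩, rfl⟩
    obtain ⟨u, w, rfl, hu, hw⟩ := hq.1.exists_eq_append_cons_one
    exact ⟨(inflateOne_mem_avoiders_iff hu hw).2 hq,
      (three_le_getLastD_inflateOne_iff fun v hv => (hq.1.mem_iff.1 hv).1).2 hz⟩

theorem ncard_avoidersLastGe_three (m : ℕ) :
    (avoidersLastGe (m + 2) 3).ncard = 2 * (avoidersLastGe (m + 1) 2).ncard := by
  have hinj : Set.InjOn (fun x : Bool × List ℕ => inflateOne x.1 x.2)
      (Set.univ ×ˢ avoidersLastGe (m + 1) 2) := by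
    rintro ⟨b, q⟩ ⟨-, hq, -⟩ ⟨b', q'⟩ ⟨-, hq', -⟩ h
    obtain ⟨u, w, rfl, hu, hw⟩ := hq.1.exists_eq_append_cons_one
    obtain ⟨u', w', rfl, hu', hw'⟩ := hq'.1.exists_eq_append_cons_one
    obtain ⟨rfl, e⟩ := inflateOne_inj (one_notMem_of_two_le hu) (one_notMem_of_two_le hw)
      (one_notMem_of_two_le hu') (one_notMem_of_two_le hw') h
    rw [e]
  rw [avoidersLastGe_three_eq_image, hinj.ncard_image, Set.ncard_prod, Set.ncard_univ,
    Nat.card_eq_fintype_card, Fintype.card_bool]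

theorem bcount_add_two (m : ℕ) :
    (bcount (m + 2) : ℤ) = 4 * bcount (m + 1) - 2 * bcount m := by
  have hsplit (n : ℕ) : bcount (n + 1) = bcount n + (avoidersLastGe (n + 1) 2).ncard := by
    rw [bcount_eq_ncard, ← avoidersLastGe_one, ncard_avoidersLastGe,
      ncard_avoidersLastEq le_rfl (by omega) (by omega)]
  have hlast : (avoidersLastGe (m + 2) 2).ncard =
      bcount (m + 1) + 2 * (avoidersLastGe (m + 1) 2).ncard := by
    rw [ncard_avoidersLastGe, ncard_avoidersLastEq (by omega) le_rfl (by omega),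
      ncard_avoidersLastGe_three]
  have h1 := hsplit m
  have h2 : bcount (m + 2) = bcount (m + 1) + (avoidersLastGe (m + 2) 2).ncard := hsplit (m + 1)
  omega

theorem stmt12 :
    bcount 1 = 1 ∧ bcount 2 = 2 ∧
    ∀ n : ℕ, 3 ≤ n → (bcount n : ℤ) = 4 * bcount (n - 1) - 2 * bcount (n - 2) := by
  refine ⟨bcount_eq_factorial (n := 1) (by norm_num), bcount_eq_factorial (n := 2) (by norm_num),
    fun n hn => ?_⟩
  obtain ⟨m, rfl⟩ : ∃ m, n = m + 2 := ⟨n - 2, by omega⟩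
  simpa using bcount_add_two m
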